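/- arXiv:1912.09687 — 4 statements merged into one kernel-verified Lean document; each statement's English description precedes it below -/
import Mathlib

section
/- For every integer g ≥ 1, the quotient of Ř_g by the ideal generated by the image of u_g is isomorphic, as a graded ℚ-algebra, to Ř_{g−1}, via the map sending the class of u_i to the class of u_i for 1 ≤ i ≤ g−1. -/
/-!
STATEMENT 1: For every integer `g ≥ 1`, the quotient of `Ř_g` by the ideal generated by the
image of `u_g` is isomorphic, as a graded ℚ-algebra, to `Ř_{g-1}`, via the map sending the
class of `u_i` to the class of `u_i` for `1 ≤ i ≤ g - 1`.

(The isomorphism is pinned down on the algebra generators `u_i`, which it maps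
degree-preservingly; hence it is automatically graded.)
-/

open MvPolynomial

/-- The polynomial `P_g = (1 + u_1 + ⋯ + u_g)(1 - u_1 + u_2 - ⋯ + (-1)^g u_g) - 1`,
where `u_{i+1}` is the variable `X i` for `i : Fin g`. -/
noncomputable def Pg (g : ℕ) : MvPolynomial (Fin g) ℚ :=
  (1 + ∑ i : Fin g, X i) *
    (1 + ∑ i : Fin g, (-1 : MvPolynomial (Fin g) ℚ) ^ ((i : ℕ) + 1) * X i) - 1

/-- The ideal `I_g` generated by the homogeneous components of `P_g` with respect to the
grading in which `u_i = X (i-1)` has degree `i`. -/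
noncomputable def tautIdeal (g : ℕ) : Ideal (MvPolynomial (Fin g) ℚ) :=
  Ideal.span (Set.range fun n : ℕ =>
    weightedHomogeneousComponent (fun i : Fin g => (i : ℕ) + 1) n (Pg g))

/-- The ring `Ř_g = S_g / I_g`. -/
noncomputable abbrev tautRing (g : ℕ) : Type :=
  MvPolynomial (Fin g) ℚ ⧸ tautIdeal g

/-- The class of `u_{i+1}` in `Ř_g`, for `i : Fin g`. -/
noncomputable def uCls (g : ℕ) (i : Fin g) : tautRing g :=
  Ideal.Quotient.mk (tautIdeal g) (X i)

/-!
Setting `u_g = 0` is the map `S_g → S_{g-1}` killing the last variable (`killCompl` along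
`Fin.castSucc`). It is surjective with kernel `(u_g)`, and it respects the grading, so it sends
the homogeneous components of `P_g` to those of its image `P_{g-1}`: it maps `I_g` onto
`I_{g-1}`. Hence `Ř_g ⧸ (u_g) ≅ S_g ⧸ (I_g + ker) ≅ S_{g-1} ⧸ I_{g-1} = Ř_{g-1}`.
-/

namespace MvPolynomial

section Weighted

variable {R M σ τ : Type*} [CommSemiring R] [AddCommMonoid M] {w : σ → M} {w' : τ → M}
  {f : σ → MvPolynomial τ R}

theorem isWeightedHomogeneous_aeval_monomial (hf : ∀ i, IsWeightedHomogeneous w' (f i) (w i))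
    (d : σ →₀ ℕ) (c : R) :
    IsWeightedHomogeneous w' (aeval f (monomial d c)) (Finsupp.weight w d) := by
  rw [aeval_monomial, algebraMap_eq, Finsupp.prod, Finsupp.weight_apply, Finsupp.sum]
  exact (IsWeightedHomogeneous.prod _ _ _ fun i _ => (hf i).pow (d i)).C_mul c

theorem aeval_weightedHomogeneousComponent (hf : ∀ i, IsWeightedHomogeneous w' (f i) (w i))
    (n : M) (p : MvPolynomial σ R) :
    aeval f (weightedHomogeneousComponent w n p) =
      weightedHomogeneousComponent w' n (aeval f p) := by
  induction p using induction_on' with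
  | monomial d c =>
    have hd := isWeightedHomogeneous_aeval_monomial hf d c
    by_cases hn : Finsupp.weight w d = n
    · rw [(isWeightedHomogeneous_monomial w d c hn).weightedHomogeneousComponent_same, ← hn,
        hd.weightedHomogeneousComponent_same]
    · rw [(isWeightedHomogeneous_monomial w d c rfl).weightedHomogeneousComponent_ne n
        (Ne.symm hn), hd.weightedHomogeneousComponent_ne n (Ne.symm hn), map_zero]
  | add p q hp hq => simp only [map_add, hp, hq]

end Weighted

section KillCompl

variable {R M σ τ : Type*} {f : σ → τ} (hf : Function.Injective f)

theorem killCompl_X_of_notMem_range [CommSemiring R] {i : τ} (hi : i ∉ Set.range f) :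
    killCompl (R := R) hf (X i) = 0 := by
  rw [killCompl, aeval_X, dif_neg hi]

theorem killCompl_X_apply [CommSemiring R] (j : σ) : killCompl (R := R) hf (X (f j)) = X j := by
  simpa using killCompl_rename_app hf (X j : MvPolynomial σ R)

theorem killCompl_surjective [CommSemiring R] : Function.Surjective (killCompl (R := R) hf) :=
  fun p => ⟨rename f p, killCompl_rename_app hf p⟩

theorem killCompl_weightedHomogeneousComponent [CommSemiring R] [AddCommMonoid M] (w : τ → M)
    (n : M) (p : MvPolynomial τ R) :
    killCompl hf (weightedHomogeneousComponent w n p) =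
      weightedHomogeneousComponent (w ∘ f) n (killCompl hf p) := by
  refine aeval_weightedHomogeneousComponent (fun i => ?_) n p
  split_ifs with hi
  · obtain ⟨j, rfl⟩ := hi
    simpa [Equiv.ofInjective_symm_apply] using isWeightedHomogeneous_X R (w ∘ f) j
  · exact isWeightedHomogeneous_zero R _ _

theorem ker_killCompl [CommRing R] :
    RingHom.ker (killCompl (R := R) hf) = Ideal.span (X '' (Set.range f)ᶜ) := by
  set J : Ideal (MvPolynomial τ R) := Ideal.span (X '' (Set.range f)ᶜ)
  -- modulo `J` every polynomial agrees with its image under `rename f ∘ killCompl hf`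
  have hJ : (Ideal.Quotient.mkₐ R J).comp ((rename f).comp (killCompl hf)) =
      Ideal.Quotient.mkₐ R J := by
    refine algHom_ext fun i => ?_
    by_cases hi : i ∈ Set.range f
    · obtain ⟨j, rfl⟩ := hi
      simp only [AlgHom.comp_apply, killCompl_X_apply, rename_X]
    · rw [AlgHom.comp_apply, AlgHom.comp_apply, killCompl_X_of_notMem_range hf hi, map_zero,
        map_zero, Ideal.Quotient.mkₐ_eq_mk, eq_comm, Ideal.Quotient.eq_zero_iff_mem]
      exact Ideal.subset_span ⟨i, hi, rfl⟩
  refine le_antisymm (fun p hp => ?_) (Ideal.span_le.2 ?_)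
  · rw [← Ideal.Quotient.eq_zero_iff_mem, ← Ideal.Quotient.mkₐ_eq_mk R, ← hJ]
    simp [(RingHom.mem_ker).1 hp]
  · rintro _ ⟨i, hi, rfl⟩
    exact killCompl_X_of_notMem_range hf hi

end KillCompl

theorem ker_killCompl_castSucc (R : Type*) [CommRing R] (m : ℕ) :
    RingHom.ker (killCompl (R := R) (Fin.castSucc_injective m)) =
      Ideal.span {X (Fin.last m)} := by
  have hcompl : (Set.range (Fin.castSucc : Fin m → Fin (m + 1)))ᶜ = {Fin.last m} := by
    ext i
    induction i using Fin.lastCases <;> simp [Fin.castSucc_ne_last]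
  rw [ker_killCompl, hcompl, Set.image_singleton]

end MvPolynomial

namespace Ideal

variable {R A B : Type*} [CommRing R] [CommRing A] [CommRing B] [Algebra R A] [Algebra R B]

theorem ker_mkₐ_comp_eq_sup_ker {f : A →ₐ[R] B} (hf : Function.Surjective f) (I : Ideal A) :
    RingHom.ker ((Quotient.mkₐ R (I.map f)).comp f) = I ⊔ RingHom.ker f := by
  ext a
  rw [RingHom.mem_ker, AlgHom.comp_apply, Quotient.mkₐ_eq_mk, Quotient.eq_zero_iff_mem,
    ← mem_comap, comap_map_of_surjective f hf, RingHom.ker_eq_comap_bot]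

noncomputable def quotQuotKerEquivQuotMap {f : A →ₐ[R] B} (hf : Function.Surjective f)
    (I : Ideal A) : ((A ⧸ I) ⧸ (RingHom.ker f).map (Quotient.mkₐ R I)) ≃ₐ[R] B ⧸ I.map f :=
  (DoubleQuot.quotQuotEquivQuotSupₐ R I (RingHom.ker f)).trans <|
    (quotientEquivAlgOfEq R (ker_mkₐ_comp_eq_sup_ker hf I).symm).trans
      (quotientKerAlgEquivOfSurjective ((Quotient.mkₐ_surjective R _).comp hf))

theorem quotQuotKerEquivQuotMap_mk {f : A →ₐ[R] B} (hf : Function.Surjective f) (I : Ideal A)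
    (a : A) :
    quotQuotKerEquivQuotMap hf I (Quotient.mk _ (Quotient.mk I a)) = Quotient.mk _ (f a) :=
  rfl

end Ideal

theorem killCompl_castSucc_Pg (m : ℕ) :
    killCompl (Fin.castSucc_injective m) (Pg (m + 1)) = Pg m := by
  have hlast : killCompl (R := ℚ) (Fin.castSucc_injective m) (X (Fin.last m)) = 0 :=
    killCompl_X_of_notMem_range _ (by simp)
  simp [Pg, Fin.sum_univ_castSucc, killCompl_X_apply, hlast]

theorem map_killCompl_tautIdeal (m : ℕ) :
    (tautIdeal (m + 1)).map (killCompl (Fin.castSucc_injective m)) = tautIdeal m := by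
  rw [tautIdeal, Ideal.map_span, ← Set.range_comp]
  congr 2
  funext n
  exact (killCompl_weightedHomogeneousComponent _ _ n _).trans
    (congrArg _ (killCompl_castSucc_Pg m))

theorem span_uCls_last (m : ℕ) :
    Ideal.span {uCls (m + 1) (Fin.last m)} =
      (RingHom.ker (killCompl (R := ℚ) (Fin.castSucc_injective m))).map
        (Ideal.Quotient.mkₐ ℚ (tautIdeal (m + 1))) := by
  rw [ker_killCompl_castSucc, Ideal.map_span, Set.image_singleton]
  rfl

noncomputable def tautRingQuotLastEquiv (m : ℕ) :
    (tautRing (m + 1) ⧸ Ideal.span {uCls (m + 1) (Fin.last m)}) ≃ₐ[ℚ] tautRing m :=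
  (Ideal.quotientEquivAlgOfEq ℚ (span_uCls_last m)).trans <|
    (Ideal.quotQuotKerEquivQuotMap (killCompl_surjective _) _).trans
      (Ideal.quotientEquivAlgOfEq ℚ (map_killCompl_tautIdeal m))

theorem tautRingQuotLastEquiv_mk_uCls (m : ℕ) (i : Fin m) :
    tautRingQuotLastEquiv m (Ideal.Quotient.mk _ (uCls (m + 1) i.castSucc)) = uCls m i := by
  rw [tautRingQuotLastEquiv, AlgEquiv.trans_apply, AlgEquiv.trans_apply,
    Ideal.quotientEquivAlgOfEq_mk, uCls, Ideal.quotQuotKerEquivQuotMap_mk,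
    Ideal.quotientEquivAlgOfEq_mk, killCompl_X_apply, uCls]

theorem tautRing_quotient_last (g : ℕ) (hg : 1 ≤ g) :
    ∃ e : (tautRing g ⧸ Ideal.span {uCls g ⟨g - 1, by omega⟩}) ≃ₐ[ℚ] tautRing (g - 1),
      ∀ i : Fin (g - 1),
        e (Ideal.Quotient.mk (Ideal.span {uCls g ⟨g - 1, by omega⟩})
            (uCls g (Fin.castLE (by omega) i))) = uCls (g - 1) i := by
  obtain ⟨m, rfl⟩ : ∃ m, g = m + 1 := ⟨g - 1, by omega⟩
  exact ⟨tautRingQuotLastEquiv m, tautRingQuotLastEquiv_mk_uCls m⟩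
end

section
/- Let (H, ω) be a symplectic k-vector space of dimension 2g. Then the diagonal action of Sp(H, ω) on the set of ordered pairs of Lagrangian subspaces of H has exactly g + 1 orbits. -/
/-!
STATEMENT 6: Let `(H, ω)` be a symplectic `k`-vector space of dimension `2g`. Then the
diagonal action of `Sp(H, ω)` on the set of ordered pairs of Lagrangian subspaces of `H`
has exactly `g + 1` orbits.

(We express "exactly `g + 1` orbits" by the existence of a surjection onto `Fin (g + 1)`
whose fibers are exactly the orbits.)
-/

/-- The orthogonal complement `F^⊥ = {x ∈ H : ω x y = 0 for all y ∈ F}`. -/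
def perp {k H : Type*} [Field k] [AddCommGroup H] [Module k H]
    (ω : H →ₗ[k] H →ₗ[k] k) (F : Submodule k H) : Submodule k H where
  carrier := {x | ∀ y ∈ F, ω x y = 0}
  add_mem' := by
    intro a b ha hb y hy
    simp only [map_add, LinearMap.add_apply, ha y hy, hb y hy, add_zero]
  zero_mem' := by
    intro y hy
    simp
  smul_mem' := by
    intro c x hx y hy
    simp only [map_smul, LinearMap.smul_apply, hx y hy, smul_zero]

/-- A subspace is Lagrangian if it equals its own orthogonal complement. -/
def IsLagrangian {k H : Type*} [Field k] [AddCommGroup H] [Module k H]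
    (ω : H →ₗ[k] H →ₗ[k] k) (F : Submodule k H) : Prop :=
  perp ω F = F


/-!
The invariant is `d = dim (L₁ ⊓ L₂) ≤ g`, which symplectic automorphisms preserve. Conversely,
every Lagrangian pair has a normal form in the standard model `(k × k)^g`: pick `ω u v = 1` with
`u ∈ L₁`, and `u ∈ L₂` if `L₁ ⊓ L₂ ≠ 0`, `v ∈ L₂` otherwise. Splitting off the hyperbolic plane
`span {u, v}` leaves a Lagrangian pair in `span {u, v}^⊥` whose intersection has dimension `d - 1`
(resp. still `0`), so induction on `g` yields an isometry carrying `(L₁, L₂)` to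
`(X^g, X^d × Y^(g - d))`, with `X`, `Y` the axes of the hyperbolic plane `k × k`. Two pairs with
the same `d` are therefore in one orbit, and every `d ≤ g` occurs since a maximal isotropic
subspace is Lagrangian.
-/

open Module Submodule

section LagrangianPairs

variable {k : Type*} [Field k]

section Perp

variable {H H₂ : Type*} [AddCommGroup H] [Module k H] [AddCommGroup H₂] [Module k H₂]
  {ω : H →ₗ[k] H →ₗ[k] k} {ω₂ : H₂ →ₗ[k] H₂ →ₗ[k] k} {F : Submodule k H}

lemma mem_perp {x : H} : x ∈ perp ω F ↔ ∀ y ∈ F, ω x y = 0 := Iff.rfl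

lemma mem_perp_iff_le_ker {x : H} : x ∈ perp ω F ↔ F ≤ LinearMap.ker (ω x) := Iff.rfl

lemma perp_top_eq_bot (hnd : ω.SeparatingLeft) : perp ω ⊤ = ⊥ :=
  eq_bot_iff.2 fun x hx => (mem_bot k).2 (hnd x fun y => hx y trivial)

lemma exists_mem_apply_eq_one_of_notMem_perp {x : H} (hx : x ∉ perp ω F) :
    ∃ y ∈ F, ω x y = 1 := by
  obtain ⟨y, hy, hxy⟩ : ∃ y ∈ F, ω x y ≠ 0 := by simpa [mem_perp] using hx
  exact ⟨(ω x y)⁻¹ • y, F.smul_mem _ hy, by simp [hxy]⟩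

def IsIsometry (ω : H →ₗ[k] H →ₗ[k] k) (ω₂ : H₂ →ₗ[k] H₂ →ₗ[k] k) (e : H ≃ₗ[k] H₂) : Prop :=
  ∀ x y, ω₂ (e x) (e y) = ω x y

namespace IsIsometry

variable {e : H ≃ₗ[k] H₂}

lemma refl : IsIsometry ω ω (LinearEquiv.refl k H) := fun _ _ => rfl

lemma symm (he : IsIsometry ω ω₂ e) : IsIsometry ω₂ ω e.symm := fun x y => by
  rw [← he, e.apply_symm_apply, e.apply_symm_apply]

lemma trans {H₃ : Type*} [AddCommGroup H₃] [Module k H₃] {ω₃ : H₃ →ₗ[k] H₃ →ₗ[k] k}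
    {e' : H₂ ≃ₗ[k] H₃} (he : IsIsometry ω ω₂ e) (he' : IsIsometry ω₂ ω₃ e') :
    IsIsometry ω ω₃ (e.trans e') := fun x y => (he' _ _).trans (he x y)

lemma separatingLeft (he : IsIsometry ω ω₂ e) (hnd : ω.SeparatingLeft) : ω₂.SeparatingLeft :=
  fun x hx => e.symm.injective <| by
    rw [map_zero]
    exact hnd _ fun y => by rw [← he, e.apply_symm_apply, hx]

lemma map_perp (he : IsIsometry ω ω₂ e) (F : Submodule k H) :
    (perp ω F).map e.toLinearMap = perp ω₂ (F.map e.toLinearMap) := by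
  ext x
  rw [mem_map_equiv, mem_perp, mem_perp]
  refine ⟨fun h _ hy => ?_, fun h y hy => ?_⟩
  · obtain ⟨y, hy, rfl⟩ := hy
    rw [← e.apply_symm_apply x, LinearEquiv.coe_coe, he]
    exact h y hy
  · rw [← he, e.apply_symm_apply]
    exact h _ (mem_map_of_mem hy)

lemma isLagrangian_map (he : IsIsometry ω ω₂ e) (hF : IsLagrangian ω F) :
    IsLagrangian ω₂ (F.map e.toLinearMap) := by
  rw [IsLagrangian, ← he.map_perp, hF]

end IsIsometry

lemma LinearEquiv.finrank_map_inf_map {M N : Type*} [AddCommGroup M] [Module k M]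
    [AddCommGroup N] [Module k N] (e : M ≃ₗ[k] N) (p q : Submodule k M) :
    finrank k ↥(p.map e.toLinearMap ⊓ q.map e.toLinearMap) = finrank k ↥(p ⊓ q) := by
  rw [← map_inf _ e.injective, e.finrank_map_eq]

variable [FiniteDimensional k H]

lemma finrank_perp_add_finrank (hnd : ω.SeparatingLeft) (F : Submodule k H) :
    finrank k (perp ω F) + finrank k F = finrank k H := by
  have hinj : Function.Injective ω :=
    LinearMap.ker_eq_bot.1 (LinearMap.separatingLeft_iff_ker_eq_bot.1 hnd)
  set e := ω.linearEquivOfInjective hinj Subspace.dual_finrank_eq.symm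
  have hperp : perp ω F = F.dualAnnihilator.comap (e : H →ₗ[k] Dual k H) := by
    ext x
    simp [mem_perp, mem_dualAnnihilator, e]
  rw [hperp, comap_equiv_eq_map_symm, LinearEquiv.finrank_map_eq, add_comm,
    Subspace.finrank_add_finrank_dualAnnihilator_eq]

lemma IsLagrangian.finrank_eq (hnd : ω.SeparatingLeft) {g : ℕ} (hdim : finrank k H = 2 * g)
    (hF : IsLagrangian ω F) : finrank k F = g := by
  have := finrank_perp_add_finrank hnd F
  rw [hF, hdim] at this
  omega

lemma IsLagrangian.finrank_inf_le (hF : IsLagrangian ω F) (hnd : ω.SeparatingLeft) {g : ℕ}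
    (hdim : finrank k H = 2 * g) (F' : Submodule k H) : finrank k ↥(F ⊓ F') ≤ g :=
  hF.finrank_eq hnd hdim ▸ Submodule.finrank_mono inf_le_left

lemma exists_isLagrangian (hω : ω.IsAlt) : ∃ F : Submodule k H, IsLagrangian ω F := by
  obtain ⟨F, hF, hmax⟩ :=
    wellFounded_gt.has_min {F : Submodule k H | F ≤ perp ω F} ⟨⊥, bot_le (a := perp ω ⊥)⟩
  refine ⟨F, le_antisymm (fun v hv => ?_) hF⟩
  by_contra hvF
  refine hmax (F ⊔ k ∙ v) ?_ (left_lt_sup.2 fun h => hvF (h (mem_span_singleton_self v)))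
  have hvv : k ∙ v ≤ LinearMap.ker (ω v) := (span_singleton_le_iff_mem _ _).2 (hω v)
  have hFv : ∀ x ∈ F, k ∙ v ≤ LinearMap.ker (ω x) := fun x hx =>
    (span_singleton_le_iff_mem _ _).2 <| by
      rw [LinearMap.mem_ker, ← hω.neg, hv x hx, neg_zero]
  change F ⊔ k ∙ v ≤ perp ω (F ⊔ k ∙ v)
  refine sup_le (fun x hx => mem_perp_iff_le_ker.2 (sup_le (hF hx) (hFv x hx))) ?_
  exact (span_singleton_le_iff_mem _ _).2 (mem_perp_iff_le_ker.2 (sup_le hv hvv))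

end Perp

section SumForm

variable {M₁ M₂ : Type*} [AddCommGroup M₁] [Module k M₁] [AddCommGroup M₂] [Module k M₂]

lemma Submodule.finrank_prod [FiniteDimensional k M₁] [FiniteDimensional k M₂]
    (p : Submodule k M₁) (q : Submodule k M₂) :
    finrank k (p.prod q) = finrank k p + finrank k q := by
  let e : p.prod q ≃ₗ[k] p × q :=
    { toFun := fun x => (⟨x.1.1, x.2.1⟩, ⟨x.1.2, x.2.2⟩)
      invFun := fun x => ⟨(x.1, x.2), x.1.2, x.2.2⟩
      map_add' := fun _ _ => rfl
      map_smul' := fun _ _ => rfl }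
  rw [e.finrank_eq, Module.finrank_prod]

lemma Submodule.finrank_prod_inf_prod [FiniteDimensional k M₁] [FiniteDimensional k M₂]
    (p p' : Submodule k M₁) (q q' : Submodule k M₂) :
    finrank k ↥(p.prod q ⊓ p'.prod q') = finrank k ↥(p ⊓ p') + finrank k ↥(q ⊓ q') := by
  rw [prod_inf_prod, Submodule.finrank_prod]

variable (B₁ : M₁ →ₗ[k] M₁ →ₗ[k] k) (B₂ : M₂ →ₗ[k] M₂ →ₗ[k] k)

def sumForm : M₁ × M₂ →ₗ[k] M₁ × M₂ →ₗ[k] k :=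
  B₁.compl₁₂ (LinearMap.fst k M₁ M₂) (LinearMap.fst k M₁ M₂) +
    B₂.compl₁₂ (LinearMap.snd k M₁ M₂) (LinearMap.snd k M₁ M₂)

@[simp]
lemma sumForm_apply (x y : M₁ × M₂) : sumForm B₁ B₂ x y = B₁ x.1 y.1 + B₂ x.2 y.2 := rfl

variable {B₁ B₂}

lemma perp_sumForm_prod (p : Submodule k M₁) (q : Submodule k M₂) :
    perp (sumForm B₁ B₂) (p.prod q) = (perp B₁ p).prod (perp B₂ q) := by
  ext x
  simp only [mem_prod, mem_perp, Prod.forall, sumForm_apply]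
  refine ⟨fun h => ⟨fun a ha => ?_, fun b hb => ?_⟩, fun h a b hab => ?_⟩
  · simpa using h a 0 ⟨ha, q.zero_mem⟩
  · simpa using h 0 b ⟨p.zero_mem, hb⟩
  · rw [h.1 a hab.1, h.2 b hab.2, add_zero]

lemma isLagrangian_sumForm_prod_iff {p : Submodule k M₁} {q : Submodule k M₂} :
    IsLagrangian (sumForm B₁ B₂) (p.prod q) ↔ IsLagrangian B₁ p ∧ IsLagrangian B₂ q := by
  refine ⟨fun h => ?_, fun h => by rw [IsLagrangian, perp_sumForm_prod, h.1, h.2]⟩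
  rw [IsLagrangian, perp_sumForm_prod] at h
  have hp : perp B₁ p = p := by simpa using congr_arg (comap (LinearMap.inl k M₁ M₂)) h
  have hq : perp B₂ q = q := by simpa using congr_arg (comap (LinearMap.inr k M₁ M₂)) h
  exact ⟨hp, hq⟩

lemma IsIsometry.prodCongr {M₁' M₂' : Type*} [AddCommGroup M₁'] [Module k M₁'] [AddCommGroup M₂']
    [Module k M₂'] {B₁' : M₁' →ₗ[k] M₁' →ₗ[k] k} {B₂' : M₂' →ₗ[k] M₂' →ₗ[k] k}
    {e₁ : M₁ ≃ₗ[k] M₁'} {e₂ : M₂ ≃ₗ[k] M₂'} (he₁ : IsIsometry B₁ B₁' e₁)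
    (he₂ : IsIsometry B₂ B₂' e₂) :
    IsIsometry (sumForm B₁ B₂) (sumForm B₁' B₂') (e₁.prodCongr e₂) := fun x y => by
  simp [he₁ x.1 y.1, he₂ x.2 y.2]

lemma LinearMap.SeparatingLeft.of_sumForm (hnd : (sumForm B₁ B₂).SeparatingLeft) :
    B₂.SeparatingLeft :=
  fun x hx => congr_arg Prod.snd (hnd (0, x) fun y => by simp [hx])

lemma IsIsometry.isLagrangian_of_map_eq_prod {H : Type*} [AddCommGroup H] [Module k H]
    {ω : H →ₗ[k] H →ₗ[k] k} {e : H ≃ₗ[k] M₁ × M₂} (he : IsIsometry ω (sumForm B₁ B₂) e)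
    {L : Submodule k H} (hL : IsLagrangian ω L) {p : Submodule k M₁} {q : Submodule k M₂}
    (hm : L.map e.toLinearMap = p.prod q) : IsLagrangian B₂ q := by
  have := he.isLagrangian_map hL
  rw [hm] at this
  exact (isLagrangian_sumForm_prod_iff.1 this).2

end SumForm

section Model

variable (k)

def hypForm : k × k →ₗ[k] k × k →ₗ[k] k :=
  (LinearMap.mul k k).compl₁₂ (LinearMap.fst k k k) (LinearMap.snd k k k) -
    (LinearMap.mul k k).compl₁₂ (LinearMap.snd k k k) (LinearMap.fst k k k)

@[simp]
lemma hypForm_apply (x y : k × k) : hypForm k x y = x.1 * y.2 - x.2 * y.1 := rfl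

lemma isLagrangian_hypForm_top_prod_bot :
    IsLagrangian (hypForm k) ((⊤ : Submodule k k).prod ⊥) := by
  ext ⟨a, b⟩
  simp only [mem_perp, mem_prod, mem_top, mem_bot, true_and, hypForm_apply, Prod.forall]
  refine ⟨fun h => by simpa using h 1 0 rfl, fun h c d hd => by simp [h, hd]⟩

lemma isLagrangian_hypForm_bot_prod_top :
    IsLagrangian (hypForm k) ((⊥ : Submodule k k).prod ⊤) := by
  ext ⟨a, b⟩
  simp only [mem_perp, mem_prod, mem_top, mem_bot, and_true, hypForm_apply, Prod.forall]
  refine ⟨fun h => by simpa using h 0 1 rfl, fun h c d hc => by simp [h, hc]⟩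

def stdForm (n : ℕ) : (Fin n → k × k) →ₗ[k] (Fin n → k × k) →ₗ[k] k :=
  ∑ i, (hypForm k).compl₁₂ (LinearMap.proj i) (LinearMap.proj i)

lemma stdForm_apply {n : ℕ} (x y : Fin n → k × k) :
    stdForm k n x y = ∑ i, hypForm k (x i) (y i) := by
  simp [stdForm]

lemma isIsometry_consLinearEquiv (n : ℕ) :
    IsIsometry (sumForm (hypForm k) (stdForm k n)) (stdForm k (n + 1))
      (Fin.consLinearEquiv k fun _ => k × k) := fun x y => by
  simp only [stdForm_apply, Fin.consLinearEquiv_apply, Equiv.toFun_as_coe, Fin.consEquiv_apply,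
    hypForm_apply, Finset.sum_sub_distrib, Fin.sum_univ_succ, Fin.cons_zero, Fin.cons_succ,
    sumForm_apply]
  ring

/-- `stdLagrangian k n d = X^d × Y^(n - d)` for `d ≤ n`, where `X = k × 0` and `Y = 0 × k` are the
axes of the hyperbolic plane `(k × k, hypForm k)`. -/
def stdLagrangian : (n d : ℕ) → Submodule k (Fin n → k × k)
  | 0, _ => ⊤
  | n + 1, 0 => (((⊥ : Submodule k k).prod ⊤).prod (stdLagrangian n 0)).map
      (Fin.consLinearEquiv k fun _ => k × k).toLinearMap
  | n + 1, d + 1 => (((⊤ : Submodule k k).prod ⊥).prod (stdLagrangian n d)).map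
      (Fin.consLinearEquiv k fun _ => k × k).toLinearMap

lemma isLagrangian_stdLagrangian (n d : ℕ) :
    IsLagrangian (stdForm k n) (stdLagrangian k n d) := by
  induction n generalizing d with
  | zero => exact Subsingleton.elim _ _
  | succ n ih =>
    cases d
    · exact (isIsometry_consLinearEquiv k n).isLagrangian_map
        (isLagrangian_sumForm_prod_iff.2 ⟨isLagrangian_hypForm_bot_prod_top k, ih 0⟩)
    · exact (isIsometry_consLinearEquiv k n).isLagrangian_map
        (isLagrangian_sumForm_prod_iff.2 ⟨isLagrangian_hypForm_top_prod_bot k, ih _⟩)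

lemma finrank_stdLagrangian_inf {n d : ℕ} (hd : d ≤ n) :
    finrank k ↥(stdLagrangian k n n ⊓ stdLagrangian k n d) = d := by
  induction n generalizing d with
  | zero => simp [Nat.le_zero.1 hd, Subsingleton.elim (stdLagrangian k 0 0) ⊥]
  | succ n ih =>
    cases d with
    | zero =>
      rw [stdLagrangian, stdLagrangian, LinearEquiv.finrank_map_inf_map, finrank_prod_inf_prod]
      simp [ih]
    | succ d =>
      rw [stdLagrangian, stdLagrangian, LinearEquiv.finrank_map_inf_map, finrank_prod_inf_prod,
        inf_idem, Submodule.finrank_prod, ih (by omega)]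
      simp [add_comm]

end Model

section Hyperbolic

variable {H : Type*} [AddCommGroup H] [Module k H] {ω : H →ₗ[k] H →ₗ[k] k} {u v : H}

lemma mem_perp_span_pair {x : H} : x ∈ perp ω (span k {u, v}) ↔ ω x u = 0 ∧ ω x v = 0 := by
  simp [mem_perp_iff_le_ker, span_le, Set.insert_subset_iff]

variable (hω : ω.IsAlt) (huv : ω u v = 1)
include hω huv

lemma apply_swap_eq_neg_one : ω v u = -1 := by
  rw [← hω.neg, huv]

lemma sub_smul_add_smul_mem_perp (x : H) :
    x - ω x v • u + ω x u • v ∈ perp ω (span k {u, v}) := by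
  have hvu := apply_swap_eq_neg_one hω huv
  rw [mem_perp_span_pair]
  constructor <;> simp [hω.self_eq_zero, huv, hvu]

/-- It sends `u` to `(1, 0)` and `v` to `(0, 1)`. -/
noncomputable def hyperbolicSplitting : H ≃ₗ[k] (k × k) × perp ω (span k {u, v}) where
  toFun x := ((ω x v, -ω x u), ⟨_, sub_smul_add_smul_mem_perp hω huv x⟩)
  invFun p := p.1.1 • u + p.1.2 • v + p.2
  map_add' x y := by
    ext <;> simp only [map_add, LinearMap.add_apply, Prod.fst_add, Prod.snd_add, neg_add,
      Submodule.coe_add, add_smul]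
    abel
  map_smul' c x := by
    ext <;> simp [smul_sub, smul_add, mul_smul]
  left_inv x := by
    simp only [neg_smul]
    abel
  right_inv := by
    rintro ⟨⟨a, b⟩, w, hw⟩
    obtain ⟨hwu, hwv⟩ := mem_perp_span_pair.1 hw
    have hvu := apply_swap_eq_neg_one hω huv
    have hv : ω (a • u + b • v + w) v = a := by simp [hω.self_eq_zero, huv, hwv]
    have hu : ω (a • u + b • v + w) u = -b := by simp [hω.self_eq_zero, hvu, hwu]
    ext <;> simp only [hv, hu, neg_neg, neg_smul]
    abel

lemma hyperbolicSplitting_symm_apply (p : (k × k) × perp ω (span k {u, v})) :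
    (hyperbolicSplitting hω huv).symm p = p.1.1 • u + p.1.2 • v + p.2 := rfl

lemma isIsometry_hyperbolicSplitting :
    IsIsometry ω (sumForm (hypForm k) (ω.domRestrict₁₂ (perp ω (span k {u, v}))
      (perp ω (span k {u, v})))) (hyperbolicSplitting hω huv) := by
  rw [← LinearEquiv.symm_symm (hyperbolicSplitting hω huv)]
  refine IsIsometry.symm fun p q => ?_
  obtain ⟨⟨a, b⟩, w, hw⟩ := p
  obtain ⟨⟨c, d⟩, w', hw'⟩ := q
  obtain ⟨hwu, hwv⟩ := mem_perp_span_pair.1 hw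
  obtain ⟨hwu', hwv'⟩ := mem_perp_span_pair.1 hw'
  have huw' : ω u w' = 0 := by rw [← hω.neg, hwu', neg_zero]
  have hvw' : ω v w' = 0 := by rw [← hω.neg, hwv', neg_zero]
  simp only [hyperbolicSplitting_symm_apply, map_add, map_smul, LinearMap.add_apply,
    LinearMap.smul_apply, hω.self_eq_zero, smul_eq_mul, huv, apply_swap_eq_neg_one hω huv, huw',
    hvw', hwu, hwv, sumForm_apply, hypForm_apply, LinearMap.domRestrict₁₂_apply]
  ring


lemma map_hyperbolicSplitting_of_left_mem {L : Submodule k H} (hL : L ≤ perp ω L) (hu : u ∈ L) :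
    L.map (hyperbolicSplitting hω huv).toLinearMap =
      ((⊤ : Submodule k k).prod ⊥).prod (L.comap (perp ω (span k {u, v})).subtype) := by
  ext p
  have hpu : ω ((hyperbolicSplitting hω huv).symm p) u = -p.1.2 :=
    neg_eq_iff_eq_neg.1 <|
      congr_arg (fun q => q.1.2) ((hyperbolicSplitting hω huv).apply_symm_apply p)
  rw [mem_map_equiv]
  simp only [mem_prod, mem_top, mem_bot, true_and, mem_comap, subtype_apply]
  refine ⟨fun hp => ?_, fun ⟨h2, hw⟩ => ?_⟩
  · have h2 : p.1.2 = 0 := by rw [← neg_eq_zero, ← hpu, hL hp u hu]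
    refine ⟨h2, ?_⟩
    have := sub_mem hp (L.smul_mem p.1.1 hu)
    rwa [hyperbolicSplitting_symm_apply, h2, zero_smul, add_zero, add_sub_cancel_left] at this
  · rw [hyperbolicSplitting_symm_apply, h2, zero_smul, add_zero]
    exact add_mem (L.smul_mem _ hu) hw

lemma map_hyperbolicSplitting_of_right_mem {L : Submodule k H} (hL : L ≤ perp ω L) (hv : v ∈ L) :
    L.map (hyperbolicSplitting hω huv).toLinearMap =
      ((⊥ : Submodule k k).prod ⊤).prod (L.comap (perp ω (span k {u, v})).subtype) := by
  ext p
  have hpv : ω ((hyperbolicSplitting hω huv).symm p) v = p.1.1 :=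
    congr_arg (fun q => q.1.1) ((hyperbolicSplitting hω huv).apply_symm_apply p)
  rw [mem_map_equiv]
  simp only [mem_prod, mem_top, mem_bot, and_true, mem_comap, subtype_apply]
  refine ⟨fun hp => ?_, fun ⟨h1, hw⟩ => ?_⟩
  · have h1 : p.1.1 = 0 := by rw [← hpv, hL hp v hv]
    refine ⟨h1, ?_⟩
    have := sub_mem hp (L.smul_mem p.1.2 hv)
    rwa [hyperbolicSplitting_symm_apply, h1, zero_smul, zero_add, add_sub_cancel_left] at this
  · rw [hyperbolicSplitting_symm_apply, h1, zero_smul, zero_add]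
    exact add_mem (L.smul_mem _ hv) hw

end Hyperbolic

section NormalForm

variable {H : Type*} [AddCommGroup H] [Module k H] {ω : H →ₗ[k] H →ₗ[k] k}
  {L₁ L₂ : Submodule k H}

lemma exists_hyperbolic_pair (hnd : ω.SeparatingLeft) (h₂ : IsLagrangian ω L₂) (hL₁ : L₁ ≠ ⊥) :
    ∃ u v, ω u v = 1 ∧ u ∈ L₁ ∧ (u ∈ L₂ ∨ v ∈ L₂ ∧ L₁ ⊓ L₂ = ⊥) := by
  by_cases hbot : L₁ ⊓ L₂ = ⊥
  · obtain ⟨u, hu₁, hu⟩ := exists_mem_ne_zero_of_ne_bot hL₁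
    have hu₂ : u ∉ perp ω L₂ := by
      rw [h₂]
      exact fun hu₂ => hu (by simpa [hbot] using mem_inf.2 ⟨hu₁, hu₂⟩)
    obtain ⟨v, hv₂, huv⟩ := exists_mem_apply_eq_one_of_notMem_perp hu₂
    exact ⟨u, v, huv, hu₁, Or.inr ⟨hv₂, hbot⟩⟩
  · obtain ⟨u, hu₁₂, hu⟩ := exists_mem_ne_zero_of_ne_bot hbot
    have hu' : u ∉ perp ω ⊤ := by rwa [perp_top_eq_bot hnd, mem_bot]
    obtain ⟨v, -, huv⟩ := exists_mem_apply_eq_one_of_notMem_perp hu'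
    exact ⟨u, v, huv, (mem_inf.1 hu₁₂).1, Or.inl (mem_inf.1 hu₁₂).2⟩

-- The two shapes of `L₂.map Φ` match the two recursive clauses of `stdLagrangian`: the first axis
-- when the intersection loses one dimension, the second axis when it is already `0`.
lemma exists_stdLagrangian_succ_eq_map_prod {W : Type*} [AddCommGroup W] [Module k W]
    [FiniteDimensional k W] (Φ : H ≃ₗ[k] (k × k) × W) {L₁' L₂' : Submodule k W}
    (hm₁ : L₁.map Φ.toLinearMap = ((⊤ : Submodule k k).prod ⊥).prod L₁')
    (hm₂ : L₂.map Φ.toLinearMap = ((⊤ : Submodule k k).prod ⊥).prod L₂' ∨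
      L₂.map Φ.toLinearMap = ((⊥ : Submodule k k).prod ⊤).prod L₂' ∧ L₁ ⊓ L₂ = ⊥) (n : ℕ) :
    ∃ ℓ : Submodule k (k × k), L₂.map Φ.toLinearMap = ℓ.prod L₂' ∧
      (ℓ.prod (stdLagrangian k n (finrank k ↥(L₁' ⊓ L₂')))).map
        (Fin.consLinearEquiv k fun _ => k × k).toLinearMap =
        stdLagrangian k (n + 1) (finrank k ↥(L₁ ⊓ L₂)) := by
  have hd := Φ.finrank_map_inf_map L₁ L₂
  rw [hm₁] at hd
  rcases hm₂ with hm₂ | ⟨hm₂, hbot⟩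
  · rw [hm₂, finrank_prod_inf_prod, inf_idem, Submodule.finrank_prod] at hd
    simp only [finrank_top, finrank_self, finrank_bot, add_zero] at hd
    rw [← hd, Nat.add_comm 1]
    exact ⟨_, hm₂, rfl⟩
  · rw [hm₂, finrank_prod_inf_prod, hbot, finrank_bot] at hd
    rw [hbot, finrank_bot, show finrank k ↥(L₁' ⊓ L₂') = 0 by omega]
    exact ⟨_, hm₂, rfl⟩

lemma IsIsometry.exists_consLinearEquiv {W : Type*} [AddCommGroup W] [Module k W]
    {ω' : W →ₗ[k] W →ₗ[k] k} {n : ℕ} {Φ : H ≃ₗ[k] (k × k) × W}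
    (hΦ : IsIsometry ω (sumForm (hypForm k) ω') Φ) {e' : W ≃ₗ[k] (Fin n → k × k)}
    (he' : IsIsometry ω' (stdForm k n) e') :
    ∃ E : H ≃ₗ[k] (Fin (n + 1) → k × k), IsIsometry ω (stdForm k (n + 1)) E ∧
      ∀ {L : Submodule k H} {ℓ : Submodule k (k × k)} {L' : Submodule k W},
        L.map Φ.toLinearMap = ℓ.prod L' →
          L.map E.toLinearMap = (ℓ.prod (L'.map e'.toLinearMap)).map
            (Fin.consLinearEquiv k fun _ => k × k).toLinearMap := by
  refine ⟨Φ ≪≫ₗ (LinearEquiv.refl k (k × k)).prodCongr e' ≪≫ₗ Fin.consLinearEquiv k fun _ => k × k,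
    (hΦ.trans (IsIsometry.refl.prodCongr he')).trans (isIsometry_consLinearEquiv k n),
    fun hL => ?_⟩
  rw [LinearEquiv.coe_trans, LinearEquiv.coe_trans, map_comp, map_comp, hL,
    LinearEquiv.coe_prodCongr, LinearMap.prodMap_map_prod, LinearEquiv.refl_toLinearMap, map_id]

theorem exists_isIsometry_stdForm (g : ℕ) [FiniteDimensional k H] (hω : ω.IsAlt)
    (hnd : ω.SeparatingLeft) (hdim : finrank k H = 2 * g) (h₁ : IsLagrangian ω L₁)
    (h₂ : IsLagrangian ω L₂) :
    ∃ e : H ≃ₗ[k] (Fin g → k × k), IsIsometry ω (stdForm k g) e ∧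
      L₁.map e.toLinearMap = stdLagrangian k g g ∧
      L₂.map e.toLinearMap = stdLagrangian k g (finrank k ↥(L₁ ⊓ L₂)) := by
  induction g generalizing H with
  | zero =>
    have : Subsingleton H := Module.finrank_zero_iff.1 hdim
    refine ⟨LinearEquiv.ofSubsingleton _ _, fun x y => ?_, Subsingleton.elim _ _,
      Subsingleton.elim _ _⟩
    simp [Subsingleton.elim x 0, stdForm_apply]
  | succ g ih =>
    have hL₁ : L₁ ≠ ⊥ := fun h => by
      have := h₁.finrank_eq hnd hdim
      rw [h, finrank_bot] at this
      omega
    obtain ⟨u, v, huv, hu₁, hcase⟩ := exists_hyperbolic_pair hnd h₂ hL₁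
    have hΦ := isIsometry_hyperbolicSplitting hω huv
    have hW : finrank k (perp ω (span k {u, v})) = 2 * g := by
      have := (hyperbolicSplitting hω huv).finrank_eq
      rw [Module.finrank_prod, Module.finrank_prod, finrank_self] at this
      omega
    have hm₁ := map_hyperbolicSplitting_of_left_mem hω huv h₁.ge hu₁
    obtain ⟨ℓ, hm₂, hstd⟩ := exists_stdLagrangian_succ_eq_map_prod _ hm₁
      (hcase.imp (map_hyperbolicSplitting_of_left_mem hω huv h₂.ge)
        (And.imp_left (map_hyperbolicSplitting_of_right_mem hω huv h₂.ge))) g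
    obtain ⟨e', he', he'₁, he'₂⟩ := ih (ω := ω.domRestrict₁₂ _ _) (fun x => hω x)
      (hΦ.separatingLeft hnd).of_sumForm hW
      (hΦ.isLagrangian_of_map_eq_prod h₁ hm₁) (hΦ.isLagrangian_of_map_eq_prod h₂ hm₂)
    obtain ⟨E, hE, hmap⟩ := hΦ.exists_consLinearEquiv he'
    exact ⟨E, hE, by rw [hmap hm₁, he'₁]; rfl, by rw [hmap hm₂, he'₂, hstd]⟩

end NormalForm

section Orbits

variable {H : Type*} [AddCommGroup H] [Module k H] [FiniteDimensional k H]
  {ω : H →ₗ[k] H →ₗ[k] k} {g : ℕ}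

lemma exists_isIsometry_map_eq_map_of_finrank_inf_eq (hω : ω.IsAlt) (hnd : ω.SeparatingLeft)
    (hdim : finrank k H = 2 * g) {A₁ A₂ B₁ B₂ : Submodule k H} (hA₁ : IsLagrangian ω A₁)
    (hA₂ : IsLagrangian ω A₂) (hB₁ : IsLagrangian ω B₁) (hB₂ : IsLagrangian ω B₂)
    (h : finrank k ↥(A₁ ⊓ A₂) = finrank k ↥(B₁ ⊓ B₂)) :
    ∃ τ : H ≃ₗ[k] H, IsIsometry ω ω τ ∧
      A₁.map τ.toLinearMap = B₁ ∧ A₂.map τ.toLinearMap = B₂ := by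
  obtain ⟨eA, heA, hA₁', hA₂'⟩ := exists_isIsometry_stdForm g hω hnd hdim hA₁ hA₂
  obtain ⟨eB, heB, hB₁', hB₂'⟩ := exists_isIsometry_stdForm g hω hnd hdim hB₁ hB₂
  refine ⟨eA ≪≫ₗ eB.symm, heA.trans heB.symm, ?_, ?_⟩
  · rw [LinearEquiv.coe_trans, map_comp, hA₁', map_symm_eq_iff, hB₁']
  · rw [LinearEquiv.coe_trans, map_comp, hA₂', h, map_symm_eq_iff, hB₂']

lemma exists_isLagrangian_pair_finrank_inf_eq (hω : ω.IsAlt) (hnd : ω.SeparatingLeft)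
    (hdim : finrank k H = 2 * g) {d : ℕ} (hd : d ≤ g) :
    ∃ L₁ L₂ : Submodule k H, IsLagrangian ω L₁ ∧ IsLagrangian ω L₂ ∧ finrank k ↥(L₁ ⊓ L₂) = d := by
  obtain ⟨L, hL⟩ := exists_isLagrangian hω
  obtain ⟨e, he, -⟩ := exists_isIsometry_stdForm g hω hnd hdim hL hL
  refine ⟨_, _, he.symm.isLagrangian_map (isLagrangian_stdLagrangian k g g),
    he.symm.isLagrangian_map (isLagrangian_stdLagrangian k g d), ?_⟩
  rw [LinearEquiv.finrank_map_inf_map, finrank_stdLagrangian_inf k hd]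

end Orbits

end LagrangianPairs

theorem orbit_count_of_lagrangian_pairs
    {k H : Type*} [Field k] [AddCommGroup H] [Module k H] [FiniteDimensional k H]
    (g : ℕ)
    (ω : H →ₗ[k] H →ₗ[k] k)
    (halt : ∀ x, ω x x = 0)
    (hnd : ∀ x, (∀ y, ω x y = 0) → x = 0)
    (hdim : Module.finrank k H = 2 * g) :
    ∃ c : {P : Submodule k H × Submodule k H //
        IsLagrangian ω P.1 ∧ IsLagrangian ω P.2} → Fin (g + 1),
      Function.Surjective c ∧
      ∀ A B, c A = c B ↔
        ∃ τ : H ≃ₗ[k] H, (∀ x y, ω (τ x) (τ y) = ω x y) ∧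
          A.1.1.map (τ : H →ₗ[k] H) = B.1.1 ∧ A.1.2.map (τ : H →ₗ[k] H) = B.1.2 := by
  refine ⟨fun P => ⟨finrank k ↥(P.1.1 ⊓ P.1.2),
    Nat.lt_succ_of_le (P.2.1.finrank_inf_le hnd hdim P.1.2)⟩, fun i => ?_, fun A B => ?_⟩
  · obtain ⟨L₁, L₂, h₁, h₂, hd⟩ :=
      exists_isLagrangian_pair_finrank_inf_eq halt hnd hdim (Nat.le_of_lt_succ i.2)
    exact ⟨⟨(L₁, L₂), h₁, h₂⟩, Fin.ext hd⟩
  rw [Fin.mk.injEq]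
  refine ⟨exists_isIsometry_map_eq_map_of_finrank_inf_eq halt hnd hdim A.2.1 A.2.2 B.2.1 B.2.2,
    fun ⟨τ, _, h₁, h₂⟩ => ?_⟩
  rw [← h₁, ← h₂, τ.finrank_map_inf_map]
end

section
/- Let k be a perfect field of characteristic p > 0, (H, ω) a finite-dimensional symplectic k-vector space, I ⊆ H an isotropic subspace, and φ a symplectic zip on H compatible with I. Then the image of φ intersects I trivially: (im φ) ∩ I = 0. -/
/-- Over a perfect field the Frobenius is surjective, so ranges of Frobenius-semilinear
maps are submodules. -/
instance frobeniusSurjective (k : Type*) [Field k] (p : ℕ) [Fact p.Prime] [CharP k p]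
    [PerfectRing k p] : RingHomSurjective (frobenius k p) :=
  ⟨surjective_frobenius k p⟩

theorem LinearMap.range_sup_eq_top_of_forall_sub_mem {R S M N : Type*} [Semiring R] [Semiring S]
    [AddCommGroup M] [AddCommGroup N] [Module R M] [Module S N] {σ : R →+* S}
    [RingHomSurjective σ] (f : M →ₛₗ[σ] N) (P : Submodule S N)
    (hf : ∀ y, ∃ x, y - f x ∈ P) : LinearMap.range f ⊔ P = ⊤ := by
  refine eq_top_iff.2 fun y _ ↦ ?_
  obtain ⟨x, hx⟩ := hf y
  simpa using Submodule.add_mem_sup (LinearMap.mem_range_self f x) hx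

/-- An element of `F ⊓ I` is orthogonal both to `F` and to `I^⊥`, hence to all of `H`. -/
theorem inf_eq_bot_of_le_perp_of_sup_perp_eq_top {k H : Type*} [Field k] [AddCommGroup H]
    [Module k H] {ω : H →ₗ[k] H →ₗ[k] k} (halt : ω.IsAlt) (hnd : ω.SeparatingLeft)
    {F I : Submodule k H} (hF : F ≤ perp ω F) (hFI : F ⊔ perp ω I = ⊤) : F ⊓ I = ⊥ := by
  refine eq_bot_iff.2 fun y ⟨hyF, hyI⟩ ↦ (Submodule.mem_bot k).2 <| hnd y fun z ↦ ?_
  obtain ⟨f, hf, w, hw, rfl⟩ := Submodule.mem_sup.1 (hFI ▸ Submodule.mem_top : z ∈ F ⊔ perp ω I)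
  rw [halt.eq_iff, map_add, LinearMap.add_apply, hF hf y hyF, hw y hyI, add_zero]

theorem zip_range_inter_isotropic_trivial_general
    {k : Type*} [Field k] (p : ℕ) [Fact p.Prime] [CharP k p] [PerfectRing k p]
    {H : Type*} [AddCommGroup H] [Module k H]
    (ω : H →ₗ[k] H →ₗ[k] k)
    (halt : ∀ x, ω x x = 0)
    (hnd : ∀ x, (∀ y, ω x y = 0) → x = 0)
    (I : Submodule k H)
    (φ : H →ₛₗ[frobenius k p] H)
    (hrange : IsLagrangian ω (LinearMap.range φ))
    -- compatibility with `I`: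
    (hφsurj : ∀ y : H, ∃ x : H, y - φ x ∈ perp ω I) :
    LinearMap.range φ ⊓ I = ⊥ :=
  inf_eq_bot_of_le_perp_of_sup_perp_eq_top halt hnd hrange.ge
    (φ.range_sup_eq_top_of_forall_sub_mem _ hφsurj)

theorem zip_range_inter_isotropic_trivial
    {k : Type*} [Field k] (p : ℕ) [Fact p.Prime] [CharP k p] [PerfectRing k p]
    {H : Type*} [AddCommGroup H] [Module k H] [FiniteDimensional k H]
    (ω : H →ₗ[k] H →ₗ[k] k)
    (halt : ∀ x, ω x x = 0)
    (hnd : ∀ x, (∀ y, ω x y = 0) → x = 0)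
    (I : Submodule k H) (hiso : I ≤ perp ω I)
    (φ : H →ₛₗ[frobenius k p] H)
    (hker : IsLagrangian ω (LinearMap.ker φ))
    (hrange : IsLagrangian ω (LinearMap.range φ))
    -- compatibility with `I`:
    (hφI : ∀ x ∈ I, φ x = 0)
    (hφP : ∀ x ∈ perp ω I, φ x ∈ perp ω I)
    (hφinj : ∀ x : H, φ x ∈ perp ω I → x ∈ perp ω I)
    (hφsurj : ∀ y : H, ∃ x : H, y - φ x ∈ perp ω I) :
    LinearMap.range φ ⊓ I = ⊥ :=
  zip_range_inter_isotropic_trivial_general p ω halt hnd I φ hrange hφsurj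
end

section
/- Let k be a perfect field of characteristic p > 0, (H, ω) a finite-dimensional symplectic k-vector space, I ⊆ H an isotropic subspace, and φ a symplectic zip on H compatible with I, with induced Frobenius-semilinear map φ' on H' = I^⊥/I. Then the kernel of φ' equals (ker φ)/I and is a Lagrangian subspace of (H', ω'). -/
/-!
`φ' x̄ = 0` says `φ x ∈ I`. Such a vector is orthogonal to `range φ`, which is Lagrangian, and
to `I^⊥` (orthogonality is symmetric as `ω` is alternating); since `φ` is surjective modulo
`I^⊥`, these two span `H`, so `φ x = 0` by nondegeneracy. Hence `ker φ' = ker φ / I`. Any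
Lagrangian `L ⊇ I` satisfies `L = L^⊥ ⊆ I^⊥`, and `ω'` is computed on representatives, so
`(L / I)^⊥ = L^⊥ / I = L / I` in `I^⊥ / I`.
-/

namespace Submodule

variable {k H : Type*} [Field k] [AddCommGroup H] [Module k H]

theorem mk_mem_map_mkQ_comap_iff {P I K : Submodule k H} (hIK : I ≤ K) (x : P) :
    (Quotient.mk x : P ⧸ I.comap P.subtype) ∈ (K.comap P.subtype).map (I.comap P.subtype).mkQ ↔
      (x : H) ∈ K := by
  rw [← mkQ_apply, ← mem_comap, comap_map_mkQ, sup_eq_right.2 (comap_mono hIK), mem_comap,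
    subtype_apply]

end Submodule

section Symplectic

variable {k H : Type*} [Field k] [AddCommGroup H] [Module k H] {ω : H →ₗ[k] H →ₗ[k] k}

theorem perp_anti {F G : Submodule k H} (hFG : F ≤ G) : perp ω G ≤ perp ω F :=
  fun _ hx y hy => hx y (hFG hy)

theorem IsLagrangian.le_perp {L : Submodule k H} (hL : IsLagrangian ω L) : L ≤ perp ω L :=
  le_of_eq hL.symm

theorem IsLagrangian.apply_eq_zero {L : Submodule k H} (hL : IsLagrangian ω L) {x y : H}
    (hx : x ∈ L) (hy : y ∈ L) : ω x y = 0 :=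
  hL.le_perp hx y hy

theorem IsLagrangian.le_perp_of_le {L I : Submodule k H} (hL : IsLagrangian ω L) (hIL : I ≤ L) :
    L ≤ perp ω I :=
  hL ▸ perp_anti hIL

theorem eq_zero_of_mem_of_mem_perp (halt : ω.IsAlt) (hnd : ∀ x, (∀ y, ω x y = 0) → x = 0)
    {I R : Submodule k H} (hspan : R ⊔ perp ω I = ⊤) {z : H} (hzI : z ∈ I)
    (hzR : z ∈ perp ω R) : z = 0 := by
  refine hnd z fun y => ?_
  obtain ⟨r, hr, q, hq, rfl⟩ := Submodule.mem_sup.1 (hspan ▸ Submodule.mem_top : y ∈ R ⊔ perp ω I)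
  rw [map_add, hzR r hr, halt.eq_iff.1 (hq z hzI), add_zero]

theorem IsLagrangian.map_mkQ_comap {L I : Submodule k H} (hL : IsLagrangian ω L) (hIL : I ≤ L)
    (ω' : (perp ω I ⧸ I.comap (perp ω I).subtype) →ₗ[k]
        (perp ω I ⧸ I.comap (perp ω I).subtype) →ₗ[k] k)
    (hω' : ∀ x y : perp ω I,
        ω' (Submodule.Quotient.mk x) (Submodule.Quotient.mk y) = ω (x : H) (y : H)) :
    IsLagrangian ω'
      ((L.comap (perp ω I).subtype).map (I.comap (perp ω I).subtype).mkQ) := by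
  ext z
  obtain ⟨x, rfl⟩ := Submodule.Quotient.mk_surjective _ z
  rw [Submodule.mk_mem_map_mkQ_comap_iff hIL]
  constructor
  · intro hx
    rw [← hL]
    intro y hy
    have hyI : y ∈ perp ω I := hL.le_perp_of_le hIL hy
    rw [← hω' x ⟨y, hyI⟩]
    exact hx _ ((Submodule.mk_mem_map_mkQ_comap_iff hIL _).2 hy)
  · rintro hx _ ⟨y, hy, rfl⟩
    rw [Submodule.mkQ_apply, hω']
    exact hL.apply_eq_zero hx hy

end Symplectic

theorem zip_induced_kernel_general
    {k : Type*} [Field k] (p : ℕ) [Fact p.Prime] [CharP k p] [PerfectRing k p]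
    {H : Type*} [AddCommGroup H] [Module k H]
    (ω : H →ₗ[k] H →ₗ[k] k)
    (halt : ∀ x, ω x x = 0)
    (hnd : ∀ x, (∀ y, ω x y = 0) → x = 0)
    (I : Submodule k H)
    (φ : H →ₛₗ[frobenius k p] H)
    (hker : IsLagrangian ω (LinearMap.ker φ))
    (hrange : IsLagrangian ω (LinearMap.range φ))
    -- compatibility with `I`:
    (hφI : ∀ x ∈ I, φ x = 0)
    (hφP : ∀ x ∈ perp ω I, φ x ∈ perp ω I)
    (hφsurj : ∀ y : H, ∃ x : H, y - φ x ∈ perp ω I)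
    -- the induced form `ω'` on `H' = I^⊥ / I`:
    (ω' : (perp ω I ⧸ I.comap (perp ω I).subtype) →ₗ[k]
        (perp ω I ⧸ I.comap (perp ω I).subtype) →ₗ[k] k)
    (hω' : ∀ x y : perp ω I,
        ω' (Submodule.Quotient.mk x) (Submodule.Quotient.mk y) = ω (x : H) (y : H))
    -- the induced map `φ'` on `H' = I^⊥ / I`:
    (φ' : (perp ω I ⧸ I.comap (perp ω I).subtype) →
        (perp ω I ⧸ I.comap (perp ω I).subtype))
    (hφ' : ∀ (x : perp ω I) (hx : φ (x : H) ∈ perp ω I),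
        φ' (Submodule.Quotient.mk x) =
          Submodule.Quotient.mk (⟨φ (x : H), hx⟩ : perp ω I)) :
    (∀ z, φ' z = 0 ↔
        z ∈ Submodule.map (I.comap (perp ω I).subtype).mkQ
          ((LinearMap.ker φ).comap (perp ω I).subtype)) ∧
    IsLagrangian ω'
      (Submodule.map (I.comap (perp ω I).subtype).mkQ
        ((LinearMap.ker φ).comap (perp ω I).subtype)) := by
  have hIker : I ≤ LinearMap.ker φ := hφI
  have hspan : LinearMap.range φ ⊔ perp ω I = ⊤ := by
    refine eq_top_iff.2 fun y _ => ?_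
    obtain ⟨x, hx⟩ := hφsurj y
    exact Submodule.mem_sup.2 ⟨φ x, LinearMap.mem_range_self φ x, y - φ x, hx, add_sub_cancel _ _⟩
  refine ⟨fun z => ?_, hker.map_mkQ_comap hIker ω' hω'⟩
  obtain ⟨x, rfl⟩ := Submodule.Quotient.mk_surjective _ z
  rw [hφ' x (hφP x x.2), Submodule.Quotient.mk_eq_zero, Submodule.mem_comap,
    Submodule.mk_mem_map_mkQ_comap_iff hIker, Submodule.subtype_apply, LinearMap.mem_ker]
  refine ⟨fun hφx => eq_zero_of_mem_of_mem_perp halt hnd hspan hφx ?_, fun hφx => by simp [hφx]⟩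
  exact hrange.le_perp (LinearMap.mem_range_self φ x)

theorem zip_induced_kernel
    {k : Type*} [Field k] (p : ℕ) [Fact p.Prime] [CharP k p] [PerfectRing k p]
    {H : Type*} [AddCommGroup H] [Module k H] [FiniteDimensional k H]
    (ω : H →ₗ[k] H →ₗ[k] k)
    (halt : ∀ x, ω x x = 0)
    (hnd : ∀ x, (∀ y, ω x y = 0) → x = 0)
    (I : Submodule k H) (hiso : I ≤ perp ω I)
    (φ : H →ₛₗ[frobenius k p] H)
    (hker : IsLagrangian ω (LinearMap.ker φ))
    (hrange : IsLagrangian ω (LinearMap.range φ))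
    -- compatibility with `I`:
    (hφI : ∀ x ∈ I, φ x = 0)
    (hφP : ∀ x ∈ perp ω I, φ x ∈ perp ω I)
    (hφinj : ∀ x : H, φ x ∈ perp ω I → x ∈ perp ω I)
    (hφsurj : ∀ y : H, ∃ x : H, y - φ x ∈ perp ω I)
    -- the induced form `ω'` on `H' = I^⊥ / I`:
    (ω' : (perp ω I ⧸ I.comap (perp ω I).subtype) →ₗ[k]
        (perp ω I ⧸ I.comap (perp ω I).subtype) →ₗ[k] k)
    (hω' : ∀ x y : perp ω I,
        ω' (Submodule.Quotient.mk x) (Submodule.Quotient.mk y) = ω (x : H) (y : H))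
    -- the induced map `φ'` on `H' = I^⊥ / I`:
    (φ' : (perp ω I ⧸ I.comap (perp ω I).subtype) →
        (perp ω I ⧸ I.comap (perp ω I).subtype))
    (hφ' : ∀ (x : perp ω I) (hx : φ (x : H) ∈ perp ω I),
        φ' (Submodule.Quotient.mk x) =
          Submodule.Quotient.mk (⟨φ (x : H), hx⟩ : perp ω I)) :
    (∀ z, φ' z = 0 ↔
        z ∈ Submodule.map (I.comap (perp ω I).subtype).mkQ
          ((LinearMap.ker φ).comap (perp ω I).subtype)) ∧
    IsLagrangian ω'
      (Submodule.map (I.comap (perp ω I).subtype).mkQ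
        ((LinearMap.ker φ).comap (perp ω I).subtype)) :=
  zip_induced_kernel_general p ω halt hnd I φ hker hrange hφI hφP hφsurj ω' hω' φ' hφ'
end
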